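/- arXiv:1604.04045 — 5 statements merged into one kernel-verified Lean document; each statement's English description precedes it below -/
import Mathlib

section
/- (Cheap Lemma) Let G be a graph with root r, and let G* be a spanning subgraph of G that preserves distances to r and is r-greedy (every configuration on G* of size at least π(G*,r) admits a greedy r-solution). Then every configuration on G of size at least π(G*,r) admits an r-solution whose cost (number of pebbles consumed by the steps plus the one arriving at r) is at most 2^{ecc_G(r)}. -/
open SimpleGraph

/-- A single pebbling step: remove two pebbles from `u`, add one to a neighbor `v`. -/
def PebStep {V : Type} (G : SimpleGraph V) (C C' : V → ℕ) : Prop :=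
  ∃ u v : V, G.Adj u v ∧ 2 ≤ C u ∧
    C' u + 2 = C u ∧ C' v = C v + 1 ∧ ∀ w, w ≠ u → w ≠ v → C' w = C w

/-- `C` is `t`-fold `r`-solvable. -/
def TSolvable {V : Type} (G : SimpleGraph V) (C : V → ℕ) (r : V) (t : ℕ) : Prop :=
  ∃ C', Relation.ReflTransGen (PebStep G) C C' ∧ t ≤ C' r

/-- The `t`-pebbling number of `G` rooted at `r`. -/
noncomputable def piT {V : Type} (G : SimpleGraph V) (r : V) (t : ℕ) : ℕ :=
  sInf {s | ∀ C : V → ℕ, s ≤ ∑ᶠ v, C v → TSolvable G C r t}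

/-- The pebbling number of `G` rooted at `r`. -/
noncomputable def pin {V : Type} (G : SimpleGraph V) (r : V) : ℕ := piT G r 1

/-- The `t`-pebbling number of `G`. -/
noncomputable def piGt {V : Type} (G : SimpleGraph V) (t : ℕ) : ℕ := ⨆ r, piT G r t

/-- The pebbling number of `G`. -/
noncomputable def piG {V : Type} (G : SimpleGraph V) : ℕ := ⨆ r, pin G r

/-- Eccentricity of `r`. -/
noncomputable def eccG {V : Type} (G : SimpleGraph V) (r : V) : ℕ := ⨆ v, G.dist r v

/-- Diameter of `G`. -/
noncomputable def diamG {V : Type} (G : SimpleGraph V) : ℕ := ⨆ u, eccG G u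

/-- A greedy pebbling step (strictly decreases distance to the root `r`). -/
def GreedyStep {V : Type} (G : SimpleGraph V) (r : V) (C C' : V → ℕ) : Prop :=
  ∃ u v : V, G.Adj u v ∧ G.dist v r < G.dist u r ∧ 2 ≤ C u ∧
    C' u + 2 = C u ∧ C' v = C v + 1 ∧ ∀ w, w ≠ u → w ≠ v → C' w = C w

/-- Reachability in exactly `k` pebbling steps. -/
def ReachIn {V : Type} (G : SimpleGraph V) : ℕ → (V → ℕ) → (V → ℕ) → Prop
  | 0, C, C' => C' = C
  | k + 1, C, C' => ∃ D, PebStep G C D ∧ ReachIn G k D C'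

open scoped Classical

/-- Monotonicity: a solution from a subconfiguration `U ≤ C` in a subgraph `H ≤ G`
lifts to a solution from `C` in `G` with the same number of steps. -/
lemma reachIn_mono {V : Type} {G H : SimpleGraph V} (hle : H ≤ G) :
    ∀ (k : ℕ) (U U' C : V → ℕ), ReachIn H k U U' → (∀ v, U v ≤ C v) →
      ∃ C', ReachIn G k C C' ∧ ∀ v, U' v ≤ C' v := by
  intro k
  induction k with
  | zero =>
    intro U U' C h hUC
    have h0 : U' = U := h
    exact ⟨C, rfl, fun v => by rw [h0]; exact hUC v⟩
  | succ k ih =>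
    intro U U' C h hUC
    obtain ⟨D, ⟨u, v, hadj, h2, hu, hv, hw⟩, hrest⟩ := h
    have hne : u ≠ v := hadj.ne
    have h2C : 2 ≤ C u := le_trans h2 (hUC u)
    set C1 : V → ℕ := fun w => if w = u then C u - 2 else if w = v then C v + 1 else C w
      with hC1
    have hDC1 : ∀ w, D w ≤ C1 w := by
      intro w
      by_cases hwu : w = u
      · subst hwu
        have := hUC w
        simp only [hC1, if_pos rfl]
        omega
      · by_cases hwv : w = v
        · subst hwv
          have := hUC w
          simp only [hC1, if_neg hwu, if_pos rfl, eq_self_iff_true, if_true]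
          omega
        · have := hUC w
          have := hw w hwu hwv
          simp only [hC1, if_neg hwu, if_neg hwv]
          omega
    obtain ⟨C', hC', hge⟩ := ih D U' C1 hrest hDC1
    refine ⟨C', ⟨C1, ⟨u, v, hle hadj, h2C, ?_, ?_, ?_⟩, hC'⟩, hge⟩
    · simp only [hC1, if_pos rfl]; omega
    · simp only [hC1, if_neg (Ne.symm hne), if_pos rfl, eq_self_iff_true, if_true]
    · intro w hwu hwv; simp only [hC1, if_neg hwu, if_neg hwv]

/-- Extraction of a cheap sub-solution from a greedy solution. -/
lemma extract_cheap {V : Type} [Fintype V] (H : SimpleGraph V) (r : V) (e : ℕ)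
    (he : ∀ v, H.dist v r ≤ e)
    (hup : ∀ u v : V, H.Adj u v → H.dist v r < H.dist u r →
      H.dist u r = H.dist v r + 1) (x : V) :
    ∀ (C C' : V → ℕ), Relation.ReflTransGen (GreedyStep H r) C C' → 1 ≤ C' x →
    ∃ (U : V → ℕ) (k : ℕ), (∀ v, U v ≤ C v) ∧
      ReachIn H k U (fun w => if w = x then 1 else 0) ∧
      k + 1 = ∑ v, U v ∧
      (∑ v, U v * 2 ^ (e - H.dist v r)) = 2 ^ (e - H.dist x r) := by
  intro C C' h hx
  induction h using Relation.ReflTransGen.head_induction_on with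
  | refl =>
    refine ⟨fun w => if w = x then 1 else 0, 0, ?_, rfl, ?_, ?_⟩
    · intro v
      by_cases hv : v = x
      · subst hv; simpa using hx
      · simp [hv]
    · simp [Finset.sum_ite_eq']
    · simp [ite_mul, one_mul, zero_mul, Finset.sum_ite_eq']
  | head hstep htail ih =>
    rename_i a c
    obtain ⟨u, v, hadj, hlt, h2, hu, hv, hw⟩ := hstep
    obtain ⟨U, k, hUle, hreach, hsum, hwt⟩ := ih
    have hne : u ≠ v := hadj.ne
    by_cases hcase : U v ≤ a v
    · refine ⟨U, k, ?_, hreach, hsum, hwt⟩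
      intro w
      by_cases hwu : w = u
      · subst hwu; have := hUle w; omega
      · by_cases hwv : w = v
        · subst hwv; exact hcase
        · have := hUle w; have := hw w hwu hwv; omega
    · -- U uses the pebble produced by the first step; prepend that step.
      have hUv : U v = a v + 1 := by have := hUle v; omega
      have h1U : 1 ≤ U v := by omega
      set U' : V → ℕ := fun w => if w = u then U u + 2 else if w = v then U v - 1 else U w
        with hU'
      have hU'u : U' u = U u + 2 := by simp only [hU', if_pos rfl]
      have hU'v : U' v = U v - 1 := by simp only [hU', if_neg (Ne.symm hne), if_pos rfl, eq_self_iff_true, if_true]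
      have hU'w : ∀ w, w ≠ u → w ≠ v → U' w = U w := by
        intro w hwu hwv; simp only [hU', if_neg hwu, if_neg hwv]
      have hstep' : PebStep H U' U := by
        refine ⟨u, v, hadj, ?_, ?_, ?_, ?_⟩
        · rw [hU'u]; omega
        · rw [hU'u]
        · rw [hU'v]; omega
        · intro w hwu hwv; exact (hU'w w hwu hwv).symm
      have hdu : H.dist u r = H.dist v r + 1 := hup u v hadj hlt
      have hdue : H.dist u r ≤ e := he u
      refine ⟨U', k + 1, ?_, ⟨U, hstep', hreach⟩, ?_, ?_⟩
      · intro w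
        by_cases hwu : w = u
        · subst hwu
          have := hUle w
          rw [hU'u]
          omega
        · by_cases hwv : w = v
          · subst hwv
            rw [hU'v]
            omega
          · have := hUle w; have := hw w hwu hwv
            rw [hU'w w hwu hwv]
            omega
      · -- sum increases by 1
        have hpt : ∀ w, U' w + (if w = v then 1 else 0)
            = U w + (if w = u then 2 else 0) := by
          intro w
          by_cases hwu : w = u
          · subst hwu; rw [hU'u, if_neg hne, if_pos rfl]
          · by_cases hwv : w = v
            · subst hwv; rw [hU'v, if_pos rfl, if_neg hwu]; omega
            · rw [hU'w w hwu hwv, if_neg hwv, if_neg hwu]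
        have h := Finset.sum_congr rfl (fun w (_ : w ∈ Finset.univ) => hpt w)
        rw [Finset.sum_add_distrib, Finset.sum_add_distrib,
          Finset.sum_ite_eq' Finset.univ v (fun _ => (1 : ℕ)),
          Finset.sum_ite_eq' Finset.univ u (fun _ => (2 : ℕ))] at h
        simp only [Finset.mem_univ, if_pos] at h
        omega
      · -- the weight is preserved
        have hexp : e - H.dist v r = (e - H.dist u r) + 1 := by omega
        have hpt : ∀ w, U' w * 2 ^ (e - H.dist w r)
            + (if w = v then 2 ^ (e - H.dist v r) else 0)
            = U w * 2 ^ (e - H.dist w r)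
            + (if w = u then 2 * 2 ^ (e - H.dist u r) else 0) := by
          intro w
          by_cases hwu : w = u
          · subst hwu
            rw [hU'u, if_neg hne, if_pos rfl]
            ring
          · by_cases hwv : w = v
            · subst hwv
              obtain ⟨m, hm⟩ : ∃ m, U w = m + 1 := ⟨U w - 1, by omega⟩
              rw [hU'v, if_pos rfl, if_neg hwu, hm]
              simp only [Nat.add_sub_cancel]
              ring
            · rw [hU'w w hwu hwv, if_neg hwv, if_neg hwu]
        have h := Finset.sum_congr rfl (fun w (_ : w ∈ Finset.univ) => hpt w)
        rw [Finset.sum_add_distrib, Finset.sum_add_distrib,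
          Finset.sum_ite_eq' Finset.univ v
            (fun _ => 2 ^ (e - H.dist v r)),
          Finset.sum_ite_eq' Finset.univ u
            (fun _ => 2 * 2 ^ (e - H.dist u r))] at h
        simp only [Finset.mem_univ, if_pos] at h
        have h2pow : 2 * 2 ^ (e - H.dist u r) = 2 ^ (e - H.dist v r) := by
          rw [hexp, pow_succ]; ring
        rw [h2pow] at h
        have hWW : (∑ w, U' w * 2 ^ (e - H.dist w r))
            = ∑ w, U w * 2 ^ (e - H.dist w r) := by omega
        rw [hWW, hwt]

/-- Cheap Lemma: if `H` is an `r`-greedy spanning subgraph of `G`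
preserving distances to `r`, then every configuration of size at least `π(H,r)`
has an `r`-solution of cost (steps plus one) at most `2 ^ ecc_G(r)`. -/
theorem cheap_lemma {V : Type} [Fintype V] (G H : SimpleGraph V) (hG : G.Connected)
    (r : V) (hle : H ≤ G) (hdist : ∀ v, H.dist v r = G.dist v r)
    (hgreedy : ∀ C : V → ℕ, pin H r ≤ ∑ᶠ v, C v →
      ∃ C', Relation.ReflTransGen (GreedyStep H r) C C' ∧ 1 ≤ C' r)
    (C : V → ℕ) (hC : pin H r ≤ ∑ᶠ v, C v) :
    ∃ (k : ℕ) (C' : V → ℕ), ReachIn G k C C' ∧ 1 ≤ C' r ∧ k + 1 ≤ 2 ^ eccG G r := by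
  set e := eccG G r with he_def
  have he : ∀ v, H.dist v r ≤ e := by
    intro v
    rw [hdist, SimpleGraph.dist_comm]
    exact le_ciSup (Set.Finite.bddAbove (Set.finite_range _)) v
  have hup : ∀ u v : V, H.Adj u v → H.dist v r < H.dist u r →
      H.dist u r = H.dist v r + 1 := by
    intro u v hadj hlt
    have hub : H.dist u r ≤ H.dist v r + 1 := by
      by_cases hvr : v = r
      · subst hvr
        have := SimpleGraph.dist_le hadj.toWalk
        simpa [SimpleGraph.dist_self] using this
      · have hne0 : H.dist v r ≠ 0 := by
          rw [hdist]
          exact SimpleGraph.dist_ne_zero_iff_ne_and_reachable.mpr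
            ⟨hvr, hG.preconnected v r⟩
        obtain ⟨p, hp⟩ := SimpleGraph.exists_walk_of_dist_ne_zero hne0
        have := SimpleGraph.dist_le (SimpleGraph.Walk.cons hadj p)
        simp only [SimpleGraph.Walk.length_cons, hp] at this
        omega
    omega
  obtain ⟨C', hCC', hCr⟩ := hgreedy C hC
  obtain ⟨U, k, hUle, hreach, hsum, hwt⟩ := extract_cheap H r e he hup r C C' hCC' hCr
  have hdr : H.dist r r = 0 := SimpleGraph.dist_self
  have hk : k + 1 ≤ 2 ^ e := by
    have h1 : (∑ v, U v) ≤ ∑ v, U v * 2 ^ (e - H.dist v r) :=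
      Finset.sum_le_sum fun v _ =>
        Nat.le_mul_of_pos_right _ (pow_pos (by norm_num) _)
    rw [hwt, hdr, Nat.sub_zero] at h1
    omega
  obtain ⟨C'', hreachG, hge⟩ :=
    reachIn_mono hle k U (fun w => if w = r then 1 else 0) C hreach hUle
  refine ⟨k, C'', hreachG, ?_, hk⟩
  have := hge r
  simpa using this
end

section
/- (Wart Removal Lemma) Let G be a graph with root r, C a configuration, and W a connected component of G − X for some clique X ⊆ V(G), with r ∉ W and C(w) ≤ 1 for every w ∈ W. Then C is t-fold r-solvable on G if and only if C restricted to G − W is t-fold r-solvable on G − W. -/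
open SimpleGraph

/-! The forward direction simulates a solution on `G` by one on `G - W`. A step from `X` into `W`
is not performed; its two pebbles stay on `X` as a spare pair. Since every vertex of `W` starts
with at most one pebble, each pebble in `W` beyond the first was paid for by such a step, so
there are at least as many spare pairs as excess pebbles in `W`. When a pebble leaves `W` for
`v ∈ X`, a spare pair at `v` is dropped to one pebble, or a spare pair at some other `x ∈ X` is
moved along the clique edge `xv`. -/

variable {V : Type} {G : SimpleGraph V}

/-- Stated additively, so that no truncated subtraction occurs. -/
def IsPebMove [DecidableEq V] (D E : V → ℕ) (u v : V) : Prop :=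
  ∀ w, E w + (if w = u then 2 else 0) = D w + (if w = v then 1 else 0)

theorem IsPebMove.two_le [DecidableEq V] {D E : V → ℕ} {u v : V} (h : IsPebMove D E u v)
    (huv : u ≠ v) : 2 ≤ D u := by
  have := h u
  simp only [huv, if_true, if_false] at this
  omega

theorem pebStep_iff [DecidableEq V] {D E : V → ℕ} :
    PebStep G D E ↔ ∃ u v, G.Adj u v ∧ IsPebMove D E u v := by
  constructor
  · rintro ⟨u, v, huv, -, hu, hv, hE⟩
    refine ⟨u, v, huv, fun w => ?_⟩
    by_cases hwu : w = u
    · subst hwu; simp [huv.ne, hu]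
    · by_cases hwv : w = v
      · subst hwv; simp [hwu, hv]
      · simp [hwu, hwv, hE w hwu hwv]
  · rintro ⟨u, v, huv, hE⟩
    have hu := hE u
    have hv := hE v
    simp only [if_true, huv.ne, huv.ne.symm, if_false] at hu hv
    exact ⟨u, v, huv, hE.two_le huv.ne, by omega, by omega,
      fun w hwu hwv => by simpa [hwu, hwv] using hE w⟩

theorem exists_pebStep [DecidableEq V] {D : V → ℕ} {u v : V} (huv : G.Adj u v) (hu : 2 ≤ D u) :
    ∃ E, PebStep G D E ∧ IsPebMove D E u v := by
  have hE : IsPebMove D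
      (fun w => D w + (if w = v then 1 else 0) - (if w = u then 2 else 0)) u v := by
    intro w
    dsimp only
    split_ifs <;> subst_vars <;> omega
  exact ⟨_, pebStep_iff.2 ⟨u, v, huv, hE⟩, hE⟩

theorem PebStep.extend {s : Set V} {E E' : s → ℕ} (C : V → ℕ) (h : PebStep (G.induce s) E E') :
    PebStep G (Function.extend Subtype.val E C) (Function.extend Subtype.val E' C) := by
  obtain ⟨a, b, hab, ha2, ha, hb, hE⟩ := h
  refine ⟨a, b, hab, ?_, ?_, ?_, fun w hwa hwb => ?_⟩
  · simpa only [Subtype.val_injective.extend_apply]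
  · simpa only [Subtype.val_injective.extend_apply]
  · simpa only [Subtype.val_injective.extend_apply]
  by_cases hw : w ∈ s
  · lift w to s using hw
    simp only [Subtype.val_injective.extend_apply]
    exact hE w (by rintro rfl; exact hwa rfl) (by rintro rfl; exact hwb rfl)
  · have hw' : ¬∃ x : s, x.1 = w := fun ⟨x, hx⟩ => hw (hx ▸ x.2)
    rw [Function.extend_apply' _ _ _ hw', Function.extend_apply' _ _ _ hw']

theorem TSolvable.of_induce {s : Set V} {C : V → ℕ} {r : V} (hr : r ∈ s) {t : ℕ}
    (h : TSolvable (G.induce s) (fun v => C v) ⟨r, hr⟩ t) : TSolvable G C r t := by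
  obtain ⟨D, hCD, hD⟩ := h
  have hC : Function.extend Subtype.val (fun v : s => C v) C = C := by
    funext w
    by_cases hw : w ∈ s
    · lift w to s using hw
      exact Subtype.val_injective.extend_apply _ _ _
    · exact Function.extend_apply' _ _ _ fun ⟨x, hx⟩ => hw (hx ▸ x.2)
  have hlift : Relation.ReflTransGen (PebStep G)
      (Function.extend Subtype.val (fun v : s => C v) C) (Function.extend Subtype.val D C) :=
    hCD.lift (Function.extend Subtype.val · C) fun _ _ => PebStep.extend C
  rw [hC] at hlift
  refine ⟨_, hlift, ?_⟩
  rwa [show r = Subtype.val (⟨r, hr⟩ : s) from rfl, Subtype.val_injective.extend_apply]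

theorem mem_of_adj_of_mem_component {X : Set V} {c : (G.induce {v | v ∉ X}).ConnectedComponent}
    {u v : V} (huv : G.Adj u v) (hu : u ∈ Subtype.val '' c.supp)
    (hv : v ∉ Subtype.val '' c.supp) : v ∈ X := by
  by_contra hvX
  obtain ⟨u, hu, rfl⟩ := hu
  refine hv ⟨⟨v, hvX⟩, ?_, rfl⟩
  rw [ConnectedComponent.mem_supp_iff] at hu ⊢
  rw [← hu]
  exact ConnectedComponent.connectedComponentMk_eq_of_adj (G := G.induce _) huv.symm

section Shadow

variable [DecidableEq V] {X W : Set V}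

/-- `P` lists the spare pairs held back on `X`; `M` covers the pebbles of `D` on `W` beyond the
first one at each vertex. -/
structure Shadow (X W : Set V) (D : V → ℕ) (D' : ↥Wᶜ → ℕ) (P : Multiset ↥Wᶜ) (M : Multiset V) :
    Prop where
  mem_clique : ∀ x ∈ P, x.1 ∈ X
  le_off : ∀ v : ↥Wᶜ, D v + 2 * P.count v ≤ D' v
  le_on : ∀ w ∈ W, D w ≤ 1 + M.count w
  card_le : Multiset.card M ≤ Multiset.card P

variable {D E : V → ℕ} {D' : ↥Wᶜ → ℕ} {P : Multiset ↥Wᶜ} {M : Multiset V} {u v : V}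

theorem Shadow.restrict {C : V → ℕ} (hC : ∀ w ∈ W, C w ≤ 1) :
    Shadow X W C (fun v => C v) 0 0 where
  mem_clique := by simp
  le_off := by simp
  le_on w hw := by simpa using hC w hw
  card_le := le_rfl

theorem Shadow.mem_of_two_le (h : Shadow X W D D' P M) (hu : u ∈ W) (h2 : 2 ≤ D u) : u ∈ M :=
  Multiset.count_pos.1 (by have := h.le_on u hu; omega)

theorem Shadow.step_within (h : Shadow X W D D' P M) (hu : u ∈ W) (hv : v ∈ W) (huv : u ≠ v)
    (hE : IsPebMove D E u v) :
    Shadow X W E D' P (v ::ₘ (M - {u})) := by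
  have huM : u ∈ M := h.mem_of_two_le hu (hE.two_le huv)
  refine ⟨h.mem_clique, fun w => ?_, fun w hw => ?_, ?_⟩
  · have hwu : (w : V) ≠ u := fun h => w.2 (h ▸ hu)
    have hwv : (w : V) ≠ v := fun h => w.2 (h ▸ hv)
    have hEw := hE w
    simp only [hwu, hwv, if_false, add_zero] at hEw
    exact hEw ▸ h.le_off w
  · have hEw := hE w
    have hDw := h.le_on w hw
    have hDu := h.le_on u hu
    simp only [Multiset.count_cons, Multiset.count_sub, Multiset.count_singleton]
    split_ifs at hEw ⊢ <;> subst_vars <;> omega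
  · have := h.card_le
    have := Multiset.card_pos_iff_exists_mem.2 ⟨u, huM⟩
    rw [Multiset.card_cons, Multiset.card_sub (Multiset.singleton_le.2 huM),
      Multiset.card_singleton]
    omega

theorem Shadow.step_in (h : Shadow X W D D' P M) (hu : u ∉ W) (hv : v ∈ W) (huX : u ∈ X)
    (hE : IsPebMove D E u v) :
    Shadow X W E D' (⟨u, hu⟩ ::ₘ P) (v ::ₘ M) := by
  refine ⟨?_, fun w => ?_, fun w hw => ?_, ?_⟩
  · rintro x hx
    rcases Multiset.mem_cons.1 hx with rfl | hx
    exacts [huX, h.mem_clique x hx]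
  · have hwv : (w : V) ≠ v := fun h => w.2 (h ▸ hv)
    have hEw := hE w
    have hDw := h.le_off w
    simp only [hwv, if_false, add_zero, Multiset.count_cons, Subtype.ext_iff] at hEw ⊢
    split_ifs at hEw ⊢ <;> omega
  · have hwu : w ≠ u := fun h => hu (h ▸ hw)
    have hEw := hE w
    have hDw := h.le_on w hw
    simp only [hwu, if_false, add_zero, Multiset.count_cons] at hEw ⊢
    split_ifs at hEw ⊢ <;> omega
  · simpa using h.card_le

theorem Shadow.step_off (h : Shadow X W D D' P M) (hu : u ∉ W) (hv : v ∉ W) (huv : G.Adj u v)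
    (hE : IsPebMove D E u v) :
    ∃ E', PebStep (G.induce Wᶜ) D' E' ∧ Shadow X W E E' P M := by
  obtain ⟨E', hstep, hE'⟩ := exists_pebStep (G := G.induce Wᶜ) (u := ⟨u, hu⟩) (v := ⟨v, hv⟩) huv
    ((hE.two_le huv.ne).trans ((Nat.le_add_right _ _).trans (h.le_off ⟨u, hu⟩)))
  refine ⟨E', hstep, h.mem_clique, fun w => ?_, fun w hw => ?_, h.card_le⟩
  · have hEw := hE w
    have hE'w := hE' w
    have hDw := h.le_off w
    simp only [Subtype.ext_iff] at hE'w
    split_ifs at hEw hE'w <;> omega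
  · have hwu : w ≠ u := fun h => hu (h ▸ hw)
    have hwv : w ≠ v := fun h => hv (h ▸ hw)
    have hEw := hE w
    simp only [hwu, hwv, if_false, add_zero] at hEw
    exact hEw ▸ h.le_on w hw

theorem Shadow.step_out_of_mem (h : Shadow X W D D' P M) (hu : u ∈ W) (hv : v ∉ W)
    (hvP : ⟨v, hv⟩ ∈ P) (hE : IsPebMove D E u v) :
    Shadow X W E D' (P - {⟨v, hv⟩}) (M - {u}) := by
  have huv : u ≠ v := fun h => hv (h ▸ hu)
  have huM : u ∈ M := h.mem_of_two_le hu (hE.two_le huv)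
  refine ⟨fun x hx => h.mem_clique x (Multiset.mem_of_le (Multiset.sub_le_self _ _) hx),
    fun w => ?_, fun w hw => ?_, ?_⟩
  · have hwu : (w : V) ≠ u := fun h => w.2 (h ▸ hu)
    have hEw := hE w
    have hDw := h.le_off w
    simp only [hwu, if_false, add_zero, Multiset.count_sub, Multiset.count_singleton] at hEw ⊢
    rcases eq_or_ne w ⟨v, hv⟩ with rfl | hwv
    · have := Multiset.count_pos.2 hvP
      simp only [if_true] at hEw hDw ⊢
      omega
    · have hwv' : (w : V) ≠ v := fun e => hwv (Subtype.ext e)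
      simp only [hwv, hwv', if_false, add_zero] at hEw ⊢
      omega
  · have hwv : w ≠ v := fun h => hv (h ▸ hw)
    have hEw := hE w
    have hDw := h.le_on w hw
    simp only [hwv, if_false, add_zero, Multiset.count_sub, Multiset.count_singleton] at hEw ⊢
    split_ifs at hEw ⊢ <;> omega
  · have := h.card_le
    rw [Multiset.card_sub (Multiset.singleton_le.2 huM),
      Multiset.card_sub (Multiset.singleton_le.2 hvP), Multiset.card_singleton,
      Multiset.card_singleton]
    omega

theorem Shadow.step_out_of_notMem (hX : G.IsClique X) (h : Shadow X W D D' P M) (hu : u ∈ W)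
    (hv : v ∉ W) (hvX : v ∈ X) (hvP : ⟨v, hv⟩ ∉ P)
    (hE : IsPebMove D E u v) :
    ∃ x E', PebStep (G.induce Wᶜ) D' E' ∧ Shadow X W E E' (P - {x}) (M - {u}) := by
  have huv : u ≠ v := fun h => hv (h ▸ hu)
  have huM : u ∈ M := h.mem_of_two_le hu (hE.two_le huv)
  obtain ⟨x, hxP⟩ : ∃ x, x ∈ P := Multiset.card_pos_iff_exists_mem.1
    ((Multiset.card_pos_iff_exists_mem.2 ⟨u, huM⟩).trans_le h.card_le)
  have hxv : x ≠ ⟨v, hv⟩ := by rintro rfl; exact hvP hxP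
  have hPx := Multiset.count_pos.2 hxP
  obtain ⟨E', hstep, hE'⟩ := exists_pebStep (G := G.induce Wᶜ) (D := D') (u := x) (v := ⟨v, hv⟩)
    (hX (h.mem_clique x hxP) hvX fun e => hxv (Subtype.ext e))
    (by have := h.le_off x; omega)
  refine ⟨x, E', hstep,
    fun y hy => h.mem_clique y (Multiset.mem_of_le (Multiset.sub_le_self _ _) hy),
    fun w => ?_, fun w hw => ?_, ?_⟩
  · have hwu : (w : V) ≠ u := fun h => w.2 (h ▸ hu)
    have hEw := hE w
    have hE'w := hE' w
    have hDw := h.le_off w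
    simp only [hwu, if_false, add_zero, Multiset.count_sub, Multiset.count_singleton] at hEw hE'w ⊢
    rcases eq_or_ne w ⟨v, hv⟩ with rfl | hwv
    · simp only [hxv.symm, if_true, if_false] at hEw hE'w hDw ⊢
      omega
    · have hwv' : (w : V) ≠ v := fun e => hwv (Subtype.ext e)
      simp only [hwv, hwv', if_false, add_zero] at hEw hE'w ⊢
      split_ifs at hE'w ⊢ with hwx
      · subst hwx; omega
      · omega
  · have hwv : w ≠ v := fun h => hv (h ▸ hw)
    have hEw := hE w
    have hDw := h.le_on w hw
    simp only [hwv, if_false, add_zero, Multiset.count_sub, Multiset.count_singleton] at hEw ⊢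
    split_ifs at hEw ⊢ <;> omega
  · have := h.card_le
    rw [Multiset.card_sub (Multiset.singleton_le.2 huM),
      Multiset.card_sub (Multiset.singleton_le.2 hxP), Multiset.card_singleton,
      Multiset.card_singleton]
    omega

theorem Shadow.exists_step (hX : G.IsClique X)
    (hWX : ∀ ⦃u v⦄, G.Adj u v → u ∈ W → v ∉ W → v ∈ X)
    (h : Shadow X W D D' P M) (hDE : PebStep G D E) :
    ∃ E' P' M', Relation.ReflTransGen (PebStep (G.induce Wᶜ)) D' E' ∧ Shadow X W E E' P' M' := by
  obtain ⟨u, v, huv, hE⟩ := pebStep_iff.1 hDE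
  by_cases hu : u ∈ W <;> by_cases hv : v ∈ W
  · exact ⟨D', P, _, .refl, h.step_within hu hv huv.ne hE⟩
  · by_cases hvP : ⟨v, hv⟩ ∈ P
    · exact ⟨D', _, _, .refl, h.step_out_of_mem hu hv hvP hE⟩
    · obtain ⟨x, E', hstep, h'⟩ := h.step_out_of_notMem hX hu hv (hWX huv hu hv) hvP hE
      exact ⟨E', _, _, .single hstep, h'⟩
  · exact ⟨D', _, _, .refl, h.step_in hu hv (hWX huv.symm hv hu) hE⟩
  · obtain ⟨E', hstep, h'⟩ := h.step_off hu hv huv hE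
    exact ⟨E', _, _, .single hstep, h'⟩

theorem Shadow.exists_of_reflTransGen (hX : G.IsClique X)
    (hWX : ∀ ⦃u v⦄, G.Adj u v → u ∈ W → v ∉ W → v ∈ X)
    (h : Shadow X W D D' P M) (hDE : Relation.ReflTransGen (PebStep G) D E) :
    ∃ E' P' M', Relation.ReflTransGen (PebStep (G.induce Wᶜ)) D' E' ∧ Shadow X W E E' P' M' := by
  induction hDE with
  | refl => exact ⟨D', P, M, .refl, h⟩
  | tail _ hstep ih =>
    obtain ⟨E', P', M', hD'E', h'⟩ := ih
    obtain ⟨F', P'', M'', hE'F', h''⟩ := h'.exists_step hX hWX hstep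
    exact ⟨F', P'', M'', hD'E'.trans hE'F', h''⟩

end Shadow

theorem TSolvable.induce_compl {X W : Set V} (hX : G.IsClique X)
    (hWX : ∀ ⦃u v⦄, G.Adj u v → u ∈ W → v ∉ W → v ∈ X) {C : V → ℕ} (hC : ∀ w ∈ W, C w ≤ 1)
    {r : V} (hr : r ∉ W) {t : ℕ} (h : TSolvable G C r t) :
    TSolvable (G.induce Wᶜ) (fun v => C v) ⟨r, hr⟩ t := by
  classical
  obtain ⟨D, hCD, hD⟩ := h
  obtain ⟨D', _, _, hCD', h'⟩ := (Shadow.restrict hC).exists_of_reflTransGen hX hWX hCD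
  exact ⟨D', hCD', hD.trans ((Nat.le_add_right _ _).trans (h'.le_off ⟨r, hr⟩))⟩

/-- Wart Removal Lemma: if `W` is a connected component of `G - X` for a
clique `X`, the root `r` is not in `W`, and every vertex of `W` carries at most one
pebble, then `C` is `t`-fold `r`-solvable on `G` iff its restriction to `G - W` is
`t`-fold `r`-solvable on `G - W`. -/
theorem wart_removal {V : Type} (G : SimpleGraph V) (r : V) (C : V → ℕ)
    (X W : Set V) (hX : G.IsClique X)
    (hW : ∃ c : (G.induce {v | v ∉ X}).ConnectedComponent, W = Subtype.val '' c.supp)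
    (hr : r ∉ W) (hC : ∀ w ∈ W, C w ≤ 1) (t : ℕ) :
    TSolvable G C r t ↔
      TSolvable (G.induce {v | v ∉ W}) (fun v => C v.1) ⟨r, hr⟩ t := by
  obtain ⟨c, rfl⟩ := hW
  exact ⟨TSolvable.induce_compl hX (fun _ _ => mem_of_adj_of_mem_component) hC hr,
    TSolvable.of_induce hr⟩
end

section
/- (Edge Removal Lemma) Let r be a vertex of a connected graph G and let e be an edge joining two neighbors of r. Then π(G,r) = π(G−e,r). -/
/-! Every move on `G − uv` is a move on `G`, and conversely the first move of a
`G`-solution that crosses `uv` starts at a neighbour of `r` holding two pebbles, which can instead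
move one pebble straight to `r` along an edge that survives in `G − uv`. -/

open SimpleGraph

theorem PebStep.mono {V : Type} {G H : SimpleGraph V} (hGH : G ≤ H) {C C' : V → ℕ}
    (h : PebStep G C C') : PebStep H C C' :=
  let ⟨a, b, hab, rest⟩ := h
  ⟨a, b, hGH hab, rest⟩

theorem TSolvable.mono {V : Type} {G H : SimpleGraph V} (hGH : G ≤ H) {C : V → ℕ} {r : V}
    {t : ℕ} (h : TSolvable G C r t) : TSolvable H C r t :=
  let ⟨C', hsteps, hr⟩ := h
  ⟨C', Relation.ReflTransGen.mono (fun _ _ => PebStep.mono hGH) _ _ hsteps, hr⟩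

theorem tSolvable_one_of_adj {V : Type} {G : SimpleGraph V} {C : V → ℕ} {a r : V}
    (har : G.Adj a r) (ha : 2 ≤ C a) : TSolvable G C r 1 := by
  classical
  have hra : r ≠ a := har.ne.symm
  refine ⟨Function.update (Function.update C a (C a - 2)) r (C r + 1),
    .single ⟨a, r, har, ha, ?_, ?_, ?_⟩, ?_⟩
  · simp [hra.symm, Nat.sub_add_cancel ha]
  · simp
  · intro w hwa hwr
    simp [hwa, hwr]
  · simp

theorem adj_deleteEdges_of_adj_root {V : Type} {G : SimpleGraph V} {r u v a : V}
    (hru : G.Adj r u) (hrv : G.Adj r v) (ha : a ∈ s(u, v)) :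
    (G.deleteEdges {s(u, v)}).Adj a r := by
  rw [deleteEdges_adj, Set.mem_singleton_iff, Sym2.eq_iff]
  rcases Sym2.mem_iff.mp ha with rfl | rfl
  · exact ⟨hru.symm, by rintro (⟨-, rfl⟩ | ⟨-, rfl⟩) <;> simp_all⟩
  · exact ⟨hrv.symm, by rintro (⟨-, rfl⟩ | ⟨-, rfl⟩) <;> simp_all⟩

theorem tSolvable_deleteEdges_of_tSolvable {V : Type} {G : SimpleGraph V} {r u v : V}
    (hru : G.Adj r u) (hrv : G.Adj r v) {C : V → ℕ} (h : TSolvable G C r 1) :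
    TSolvable (G.deleteEdges {s(u, v)}) C r 1 := by
  classical
  obtain ⟨C', hsteps, hr⟩ := h
  induction hsteps using Relation.ReflTransGen.head_induction_on with
  | refl => exact ⟨C', .refl, hr⟩
  | head step _ ih =>
    obtain ⟨a, b, hab, ha, hrest⟩ := step
    by_cases he : s(a, b) = s(u, v)
    · exact tSolvable_one_of_adj
        (adj_deleteEdges_of_adj_root hru hrv (he ▸ Sym2.mem_mk_left a b)) ha
    · obtain ⟨C'', hsteps', hr'⟩ := ih
      have hab' : (G.deleteEdges {s(u, v)}).Adj a b := by
        rw [deleteEdges_adj]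
        exact ⟨hab, by simpa using he⟩
      exact ⟨C'', .head ⟨a, b, hab', ha, hrest⟩ hsteps', hr'⟩

theorem piT_congr {V : Type} {G H : SimpleGraph V} {r : V} {t : ℕ}
    (h : ∀ C, TSolvable G C r t ↔ TSolvable H C r t) : piT G r t = piT H r t := by
  simp only [piT, h]

theorem edge_removal_general {V : Type} (G : SimpleGraph V) (r u v : V)
    (hru : G.Adj r u) (hrv : G.Adj r v) :
    pin G r = pin (G.deleteEdges {s(u, v)}) r :=
  piT_congr fun _ =>
    ⟨tSolvable_deleteEdges_of_tSolvable hru hrv, TSolvable.mono (deleteEdges_le _)⟩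

/-- Edge Removal Lemma: deleting an edge joining two neighbors of the
root `r` does not change the rooted pebbling number. -/
theorem edge_removal {V : Type} (G : SimpleGraph V) (hG : G.Connected) (r u v : V)
    (hru : G.Adj r u) (hrv : G.Adj r v) (huv : G.Adj u v) :
    pin G r = pin (G.deleteEdges {s(u, v)}) r :=
  edge_removal_general G r u v hru hrv
end

section
/- Let r be a cut-vertex of a connected graph G, let H₁,…,H_k be the connected components of G − r, and let G_i be the subgraph induced by V(H_i) ∪ {r}. Then π(G,r) = 1 + Σ_i (π(G_i,r) − 1). -/
open SimpleGraph

attribute [local instance] Classical.propDecidable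

section Basic
variable {V : Type} {G : SimpleGraph V}

lemma TSolvable.of_rtg {C C' : V → ℕ} {r : V} {t : ℕ}
    (h : Relation.ReflTransGen (PebStep G) C C') (hs : TSolvable G C' r t) :
    TSolvable G C r t := by
  obtain ⟨D, hD, hDr⟩ := hs
  exact ⟨D, h.trans hD, hDr⟩

/-- Move `k` pebbles from `u` to an adjacent `v` (consuming `2k` at `u`). -/
lemma rtg_move {u v : V} (h : G.Adj u v) :
    ∀ (k : ℕ) (C : V → ℕ), 2 * k ≤ C u →
      Relation.ReflTransGen (PebStep G) C
        (fun w => if w = u then C u - 2 * k else if w = v then C v + k else C w) := by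
  intro k
  induction k with
  | zero =>
    intro C _
    have : (fun w => if w = u then C u - 2 * 0 else if w = v then C v + 0 else C w) = C := by
      funext w
      by_cases h1 : w = u
      · simp [h1]
      · by_cases h2 : w = v <;> simp [h1, h2]
        exact fun hvu => absurd hvu.symm h.ne
    rw [this]
  | succ k ih =>
    intro C hC
    have huv : u ≠ v := h.ne
    set C₁ : V → ℕ := fun w => if w = u then C u - 2 else if w = v then C v + 1 else C w with hC₁
    have h2 : 2 ≤ C u := le_trans (by omega) hC
    have hstep : PebStep G C C₁ := by
      refine ⟨u, v, h, h2, ?_, ?_, ?_⟩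
      · simp [hC₁]; omega
      · simp [hC₁, huv.symm]
      · intro w hwu hwv; simp [hC₁, hwu, hwv]
    have hk : 2 * k ≤ C₁ u := by simp [hC₁]; omega
    have := ih C₁ hk
    have heq : (fun w => if w = u then C₁ u - 2 * k else if w = v then C₁ v + k else C₁ w)
        = (fun w => if w = u then C u - 2 * (k + 1) else if w = v then C v + (k + 1) else C w) := by
      funext w
      by_cases h1 : w = u
      · simp [h1, hC₁]; omega
      · by_cases h2 : w = v
        · simp [h1, h2, hC₁, huv.symm]; omega
        · simp [h1, h2, hC₁]
    rw [heq] at this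
    exact Relation.ReflTransGen.head hstep this

/-- With `2 ^ d` pebbles on a vertex at distance `≤ d` from `r`, we can solve. -/
lemma solvable_of_two_pow (hG : G.Connected) (r : V) :
    ∀ (d : ℕ) (u : V) (C : V → ℕ), G.dist u r ≤ d → 2 ^ d ≤ C u → TSolvable G C r 1 := by
  intro d
  induction d with
  | zero =>
    intro u C hd hC
    have : u = r := by
      have := hG.preconnected u r
      have h0 : G.dist u r = 0 := Nat.le_zero.mp hd
      exact (SimpleGraph.Reachable.dist_eq_zero_iff this).mp h0
    subst this
    exact ⟨C, Relation.ReflTransGen.refl, by omega⟩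
  | succ d ih =>
    intro u C hd hC
    by_cases hur : u = r
    · subst hur; exact ⟨C, Relation.ReflTransGen.refl, le_trans Nat.one_le_two_pow hC⟩
    · obtain ⟨p, hp⟩ := hG.exists_walk_length_eq_dist u r
      cases p with
      | nil => exact absurd rfl hur
      | @cons _ x _ ha q =>
        have hqd : G.dist x r ≤ d := by
          have : G.dist x r ≤ q.length := SimpleGraph.dist_le q
          simp at hp
          omega
        have hmove := rtg_move ha (2 ^ d) C (by rw [← pow_succ']; exact hC)
        refine TSolvable.of_rtg hmove (ih x _ ?_ ?_)
        · exact hqd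
        · simpa [ha.ne'] using Nat.le_add_left (2 ^ d) (C x)

lemma rtg_zero {C' : V → ℕ} (h : Relation.ReflTransGen (PebStep G) (fun _ => 0) C') :
    C' = fun _ => 0 := by
  induction h with
  | refl => rfl
  | tail _ hstep ih =>
    subst ih
    obtain ⟨u, v, _, h2, _⟩ := hstep
    simp at h2

lemma not_solvable_zero (r : V) : ¬ TSolvable G (fun _ => 0) r 1 := by
  rintro ⟨C', hC', hr⟩
  rw [rtg_zero hC'] at hr
  simp at hr

lemma mem_piT_set [Fintype V] (hG : G.Connected) (r : V) :
    (∑ v : V, 2 ^ (G.dist v r)) ∈ {s | ∀ C : V → ℕ, s ≤ ∑ᶠ v, C v → TSolvable G C r 1} := by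
  intro C hC
  rw [finsum_eq_sum_of_fintype] at hC
  by_cases hex : ∃ v, 2 ^ (G.dist v r) ≤ C v
  · obtain ⟨v, hv⟩ := hex
    exact solvable_of_two_pow hG r (G.dist v r) v C le_rfl hv
  · push_neg at hex
    exfalso
    have : ∑ v : V, C v < ∑ v : V, 2 ^ (G.dist v r) :=
      Finset.sum_lt_sum_of_nonempty ⟨r, Finset.mem_univ r⟩ (fun v _ => hex v)
    omega

lemma pin_solves [Fintype V] (hG : G.Connected) (r : V) :
    ∀ C : V → ℕ, pin G r ≤ ∑ᶠ v, C v → TSolvable G C r 1 :=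
  Nat.sInf_mem ⟨_, mem_piT_set hG r⟩

lemma pin_pos [Fintype V] (hG : G.Connected) (r : V) : 1 ≤ pin G r := by
  by_contra h
  have h0 : pin G r = 0 := by omega
  have := pin_solves hG r (fun _ => 0) (by rw [h0]; exact Nat.zero_le _)
  exact not_solvable_zero r this

end Basic

section Lift
variable {V : Type} {G : SimpleGraph V} {s : Set V}

/-- Extend a configuration on a vertex subset by a background configuration. -/
noncomputable def extendC (C : V → ℕ) (D : s → ℕ) : V → ℕ :=
  fun w => if h : w ∈ s then D ⟨w, h⟩ else C w

lemma extend_restrict (C : V → ℕ) : extendC C (fun x : s => C x.val) = C := by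
  funext w
  unfold extendC
  split <;> rfl

lemma induce_adj_iff {a b : s} : (G.induce s).Adj a b ↔ G.Adj a.val b.val := by
  simp [comap_adj]

lemma lift_step {D D' : s → ℕ} (h : PebStep (G.induce s) D D') (C : V → ℕ) :
    PebStep G (extendC C D) (extendC C D') := by
  obtain ⟨u, v, ha, h2, hu, hv, hw⟩ := h
  refine ⟨u.val, v.val, induce_adj_iff.mp ha, ?_, ?_, ?_, ?_⟩
  · simpa [extendC, u.prop] using h2
  · simpa [extendC, u.prop] using hu
  · simpa [extendC, v.prop] using hv
  · intro w hwu hwv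
    unfold extendC
    split
    · next hws =>
      exact hw ⟨w, hws⟩ (fun he => hwu (congrArg Subtype.val he))
        (fun he => hwv (congrArg Subtype.val he))
    · rfl

lemma lift_rtg {D D' : s → ℕ} (h : Relation.ReflTransGen (PebStep (G.induce s)) D D')
    (C : V → ℕ) :
    Relation.ReflTransGen (PebStep G) (extendC C D) (extendC C D') := by
  induction h with
  | refl => exact Relation.ReflTransGen.refl
  | tail _ hstep ih => exact ih.tail (lift_step hstep C)

end Lift

section Comp
variable {V : Type} {G : SimpleGraph V} {r : V}

/-- The vertex set of the block `G_c` : component `c` together with the root. -/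
def scSet (c : (G.induce {v : V | v ≠ r}).ConnectedComponent) : Set V :=
  insert r (Subtype.val '' c.supp)

lemma r_mem_sc (c : (G.induce {v : V | v ≠ r}).ConnectedComponent) : r ∈ scSet c :=
  Set.mem_insert r _

lemma mem_sc_iff {x : V} (hx : x ≠ r) (c : (G.induce {v : V | v ≠ r}).ConnectedComponent) :
    x ∈ scSet c ↔ (G.induce {v : V | v ≠ r}).connectedComponentMk ⟨x, hx⟩ = c := by
  unfold scSet
  simp only [Set.mem_insert_iff, Set.mem_image, hx, false_or]
  constructor
  · rintro ⟨a, ha, rfl⟩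
    rwa [ConnectedComponent.mem_supp_iff] at ha
  · intro h
    exact ⟨⟨x, hx⟩, (ConnectedComponent.mem_supp_iff _ _).mpr h, rfl⟩

lemma adj_same_comp {u v : V} (h : G.Adj u v) (hu : u ≠ r) (hv : v ≠ r) :
    (G.induce {v : V | v ≠ r}).connectedComponentMk ⟨u, hu⟩
      = (G.induce {v : V | v ≠ r}).connectedComponentMk ⟨v, hv⟩ :=
  ConnectedComponent.sound (Adj.reachable (induce_adj_iff.mpr h))

lemma walk_reach (c : (G.induce {v : V | v ≠ r}).ConnectedComponent) :
    ∀ {x z : V} (_ : G.Walk x z) (_ : r = z) (hx : x ≠ r)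
      (hc : (G.induce {v : V | v ≠ r}).connectedComponentMk ⟨x, hx⟩ = c),
      (G.induce (scSet c)).Reachable ⟨x, (mem_sc_iff hx c).mpr hc⟩ ⟨r, r_mem_sc c⟩ := by
  intro x z p
  induction p with
  | nil => intro hz hx _; exact absurd hz.symm hx
  | @cons x y z ha q ih =>
    intro hz hx hc
    subst hz
    by_cases hy : y = r
    · exact Adj.reachable ((induce_adj_iff (a := ⟨x, (mem_sc_iff hx c).mpr hc⟩)
        (b := ⟨r, r_mem_sc c⟩)).mpr (hy ▸ ha))
    · have hc' : (G.induce {v : V | v ≠ r}).connectedComponentMk ⟨y, hy⟩ = c :=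
        (adj_same_comp ha hx hy).symm.trans hc
      exact (Adj.reachable ((induce_adj_iff (a := ⟨x, (mem_sc_iff hx c).mpr hc⟩)
          (b := ⟨y, (mem_sc_iff hy c).mpr hc'⟩)).mpr ha)).trans (ih rfl hy hc')

lemma sc_connected (hG : G.Connected) (c : (G.induce {v : V | v ≠ r}).ConnectedComponent) :
    (G.induce (scSet c)).Connected := by
  rw [connected_iff]
  refine ⟨?_, ⟨⟨r, r_mem_sc c⟩⟩⟩
  have key : ∀ a : scSet c, (G.induce (scSet c)).Reachable a ⟨r, r_mem_sc c⟩ := by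
    rintro ⟨a, ha⟩
    by_cases har : a = r
    · subst har; exact Reachable.refl _
    · obtain ⟨p⟩ := hG.preconnected a r
      exact walk_reach c p rfl har ((mem_sc_iff har c).mp ha)
  intro a b
  exact (key a).trans (key b).symm

end Comp

section Decomp
variable {V : Type} [Fintype V] {G : SimpleGraph V} {r : V}

lemma sum_decomp (C : V → ℕ) (h0 : C r = 0) :
    ∑ᶠ w, C w
      = ∑ᶠ c : (G.induce {v : V | v ≠ r}).ConnectedComponent,
          ∑ᶠ x : (scSet c : Set V), C x.val := by
  classical
  simp only [finsum_eq_sum_of_fintype]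
  have step1 : ∑ w : V, C w = ∑ w : {v : V // v ≠ r}, C w.val := by
    rw [← Finset.sum_subtype (p := fun v : V => v ≠ r) (Finset.univ.filter (· ≠ r))
      (by simp) C]
    rw [Finset.sum_filter_of_ne]
    intro x _ hx
    intro hxr
    exact hx (hxr ▸ h0)
  have step2 : ∑ w : {v : V // v ≠ r}, C w.val
      = ∑ c : (G.induce {v : V | v ≠ r}).ConnectedComponent,
          ∑ w ∈ Finset.univ.filter
            (fun w : {v : V // v ≠ r} =>
              (G.induce {v : V | v ≠ r}).connectedComponentMk w = c), C w.val := by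
    exact (Finset.sum_fiberwise_of_maps_to (fun i _ => Finset.mem_univ _) _).symm
  have step3 : ∀ c : (G.induce {v : V | v ≠ r}).ConnectedComponent,
      ∑ w ∈ Finset.univ.filter
            (fun w : {v : V // v ≠ r} =>
              (G.induce {v : V | v ≠ r}).connectedComponentMk w = c), C w.val
        = ∑ x : (scSet c : Set V), C x.val := by
    intro c
    rw [← Finset.sum_subtype (p := fun x : V => x ∈ scSet c)
      (insert r ((c.supp.toFinset).image Subtype.val))
      (by
        intro x
        simp [scSet, Set.mem_insert_iff]) C]
    rw [Finset.sum_insert, h0, zero_add]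
    · rw [Finset.sum_image (fun a _ b _ h => Subtype.coe_injective h)]
      apply Finset.sum_congr _ (fun _ _ => rfl)
      ext w
      simp [ConnectedComponent.mem_supp_iff]
    · intro hmem
      obtain ⟨a, _, ha⟩ := Finset.mem_image.mp hmem
      exact a.prop ha
  rw [step1, step2]
  exact Finset.sum_congr rfl (fun c _ => step3 c)

end Decomp

section Main
variable {V : Type} {G : SimpleGraph V} {r : V}

lemma step_preserve {C C' : V → ℕ} (hstep : PebStep G C C') (h0 : C r = 0)
    (hns : ∀ c : (G.induce {v : V | v ≠ r}).ConnectedComponent,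
      ¬ TSolvable (G.induce (scSet c)) (fun x => C x.val) ⟨r, r_mem_sc c⟩ 1) :
    C' r = 0 ∧ ∀ c : (G.induce {v : V | v ≠ r}).ConnectedComponent,
      ¬ TSolvable (G.induce (scSet c)) (fun x => C' x.val) ⟨r, r_mem_sc c⟩ 1 := by
  obtain ⟨u, v, ha, h2, hu, hv, hw⟩ := hstep
  have hur : u ≠ r := by rintro rfl; omega
  by_cases hvr : v = r
  · exfalso
    rw [hvr] at ha hv hw
    set c := (G.induce {v : V | v ≠ r}).connectedComponentMk ⟨u, hur⟩ with hc
    apply hns c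
    refine ⟨fun x => C' x.val, Relation.ReflTransGen.single ?_, ?_⟩
    · refine ⟨⟨u, (mem_sc_iff hur c).mpr hc.symm⟩, ⟨r, r_mem_sc c⟩,
        induce_adj_iff.mpr ha, h2, hu, hv, ?_⟩
      rintro ⟨x, hx⟩ hxu hxr
      exact hw x (fun h => hxu (Subtype.ext h)) (fun h => hxr (Subtype.ext h))
    · show 1 ≤ C' r
      omega
  · have h0' : C' r = 0 := by
      rw [hw r (fun h => hur h.symm) (fun h => hvr h.symm)]; exact h0
    refine ⟨h0', ?_⟩
    intro c hsol
    apply hns c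
    by_cases hcc : (G.induce {v : V | v ≠ r}).connectedComponentMk ⟨u, hur⟩ = c
    · have humem : u ∈ scSet c := (mem_sc_iff hur c).mpr hcc
      have hvmem : v ∈ scSet c :=
        (mem_sc_iff hvr c).mpr ((adj_same_comp ha hur hvr).symm.trans hcc)
      refine TSolvable.of_rtg (Relation.ReflTransGen.single ?_) hsol
      refine ⟨⟨u, humem⟩, ⟨v, hvmem⟩, induce_adj_iff.mpr ha, h2, hu, hv, ?_⟩
      rintro ⟨x, hx⟩ hxu hxv
      exact hw x (fun h => hxu (Subtype.ext h)) (fun h => hxv (Subtype.ext h))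
    · have heq : (fun x : (scSet c : Set V) => C' x.val) = (fun x => C x.val) := by
        funext x
        obtain ⟨x, hx⟩ := x
        by_cases hxr : x = r
        · exact hw x (fun h => hur (by rw [← h]; exact hxr))
            (fun h => hvr (by rw [← h]; exact hxr))
        · refine hw x ?_ ?_
          · rintro rfl
            exact hcc ((mem_sc_iff hur c).mp hx)
          · rintro rfl
            exact hcc ((adj_same_comp ha hur hxr).trans ((mem_sc_iff hxr c).mp hx))
      rw [heq] at hsol
      exact hsol

lemma rtg_preserve {C C' : V → ℕ}
    (hrtg : Relation.ReflTransGen (PebStep G) C C') (h0 : C r = 0)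
    (hns : ∀ c : (G.induce {v : V | v ≠ r}).ConnectedComponent,
      ¬ TSolvable (G.induce (scSet c)) (fun x => C x.val) ⟨r, r_mem_sc c⟩ 1) :
    C' r = 0 ∧ ∀ c : (G.induce {v : V | v ≠ r}).ConnectedComponent,
      ¬ TSolvable (G.induce (scSet c)) (fun x => C' x.val) ⟨r, r_mem_sc c⟩ 1 := by
  induction hrtg with
  | refl => exact ⟨h0, hns⟩
  | tail _ hstep ih => exact step_preserve hstep ih.1 ih.2

end Main

section Bounds
variable {V : Type} [Fintype V] {G : SimpleGraph V} {r : V}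

lemma upper_mem (hG : G.Connected) :
    ∀ C : V → ℕ,
      (1 + ∑ᶠ c : (G.induce {v : V | v ≠ r}).ConnectedComponent,
        (pin (G.induce (scSet c)) ⟨r, r_mem_sc c⟩ - 1)) ≤ ∑ᶠ v, C v →
      TSolvable G C r 1 := by
  classical
  intro C hC
  by_cases h0 : 1 ≤ C r
  · exact ⟨C, Relation.ReflTransGen.refl, h0⟩
  · have h0' : C r = 0 := by omega
    rw [sum_decomp (G := G) C h0'] at hC
    simp only [finsum_eq_sum_of_fintype] at hC
    have hex : ∃ c : (G.induce {v : V | v ≠ r}).ConnectedComponent,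
        pin (G.induce (scSet c)) ⟨r, r_mem_sc c⟩ ≤ ∑ x : (scSet c : Set V), C x.val := by
      by_contra hno
      push_neg at hno
      have hle : ∀ c ∈ (Finset.univ : Finset ((G.induce {v : V | v ≠ r}).ConnectedComponent)),
          ∑ x : (scSet c : Set V), C x.val
            ≤ pin (G.induce (scSet c)) ⟨r, r_mem_sc c⟩ - 1 := by
        intro c _
        have h1 := pin_pos (sc_connected hG c) (⟨r, r_mem_sc c⟩ : (scSet c : Set V))
        have h2 := hno c
        omega
      have hsum := Finset.sum_le_sum hle
      omega
    obtain ⟨c, hc⟩ := hex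
    obtain ⟨D', hrtg, hr1⟩ :=
      pin_solves (sc_connected hG c) ⟨r, r_mem_sc c⟩ (fun x => C x.val)
        (by rw [finsum_eq_sum_of_fintype]; exact hc)
    refine ⟨extendC C D', ?_, ?_⟩
    · have := lift_rtg hrtg C
      rwa [extend_restrict] at this
    · show 1 ≤ extendC C D' r
      have he : extendC C D' r = D' ⟨r, r_mem_sc c⟩ := by
        unfold extendC
        rw [dif_pos (r_mem_sc c)]
      rw [he]
      exact hr1

lemma lower_bound (hG : G.Connected) (s : ℕ)
    (hs : ∀ C : V → ℕ, s ≤ ∑ᶠ v, C v → TSolvable G C r 1) :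
    1 + ∑ᶠ c : (G.induce {v : V | v ≠ r}).ConnectedComponent,
      (pin (G.induce (scSet c)) ⟨r, r_mem_sc c⟩ - 1) ≤ s := by
  classical
  by_contra hcon
  push_neg at hcon
  have hDex : ∀ c : (G.induce {v : V | v ≠ r}).ConnectedComponent,
      ∃ D : ↥(scSet c) → ℕ,
        (pin (G.induce (scSet c)) ⟨r, r_mem_sc c⟩ - 1 ≤ ∑ᶠ x, D x) ∧
        ¬ TSolvable (G.induce (scSet c)) D ⟨r, r_mem_sc c⟩ 1 := by
    intro c
    have hpos := pin_pos (sc_connected hG c) (⟨r, r_mem_sc c⟩ : (scSet c : Set V))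
    have hlt : pin (G.induce (scSet c)) ⟨r, r_mem_sc c⟩ - 1
        < pin (G.induce (scSet c)) ⟨r, r_mem_sc c⟩ := by omega
    have hnm : ¬ (∀ D : ↥(scSet c) → ℕ,
        pin (G.induce (scSet c)) ⟨r, r_mem_sc c⟩ - 1 ≤ ∑ᶠ x, D x →
        TSolvable (G.induce (scSet c)) D ⟨r, r_mem_sc c⟩ 1) :=
      Nat.notMem_of_lt_sInf hlt
    push_neg at hnm
    exact hnm
  choose D hD1 hD2 using hDex
  have hD0 : ∀ c, D c ⟨r, r_mem_sc c⟩ = 0 := by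
    intro c
    by_contra hne
    exact hD2 c ⟨D c, Relation.ReflTransGen.refl, by omega⟩
  set C₀ : V → ℕ := fun w =>
    if hw : w ≠ r then
      D ((G.induce {v : V | v ≠ r}).connectedComponentMk ⟨w, hw⟩)
        ⟨w, (mem_sc_iff hw _).mpr rfl⟩
    else 0 with hC₀
  have hC0r : C₀ r = 0 := by simp [hC₀]
  have hRst : ∀ c, (fun x : (scSet c : Set V) => C₀ x.val) = D c := by
    intro c
    funext x
    obtain ⟨x, hx⟩ := x
    show C₀ x = D c ⟨x, hx⟩
    by_cases hxr : x = r
    · have h1 : C₀ x = 0 := by simp [hC₀, hxr]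
      have h2 : (⟨x, hx⟩ : (scSet c : Set V)) = ⟨r, r_mem_sc c⟩ := Subtype.ext hxr
      rw [h1, h2, hD0 c]
    · have hc : (G.induce {v : V | v ≠ r}).connectedComponentMk ⟨x, hxr⟩ = c :=
        (mem_sc_iff hxr c).mp hx
      have h1 : C₀ x
          = D ((G.induce {v : V | v ≠ r}).connectedComponentMk ⟨x, hxr⟩)
            ⟨x, (mem_sc_iff hxr _).mpr rfl⟩ := by
        simp [hC₀, hxr]
      rw [h1]
      subst hc
      rfl
  have hns : ∀ c : (G.induce {v : V | v ≠ r}).ConnectedComponent,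
      ¬ TSolvable (G.induce (scSet c)) (fun x => C₀ x.val) ⟨r, r_mem_sc c⟩ 1 := by
    intro c
    rw [hRst c]
    exact hD2 c
  have hsize : s ≤ ∑ᶠ v, C₀ v := by
    rw [sum_decomp (G := G) C₀ hC0r, finsum_eq_sum_of_fintype]
    rw [finsum_eq_sum_of_fintype] at hcon
    have hle : ∀ c ∈ (Finset.univ : Finset ((G.induce {v : V | v ≠ r}).ConnectedComponent)),
        pin (G.induce (scSet c)) ⟨r, r_mem_sc c⟩ - 1
          ≤ ∑ᶠ x : (scSet c : Set V), C₀ x.val := by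
      intro c _
      have : (∑ᶠ x : (scSet c : Set V), C₀ x.val) = ∑ᶠ x, D c x := by
        rw [hRst c]
      rw [this]
      exact hD1 c
    have hsum := Finset.sum_le_sum hle
    omega
  obtain ⟨C', hrtg, hr1⟩ := hs C₀ hsize
  have h0 := (rtg_preserve hrtg hC0r hns).1
  omega

end Bounds

/-- if `r` is a cut-vertex of a connected graph `G` with components
`H₁,…,H_k` of `G - r`, and `G_i` is induced by `V(H_i) ∪ {r}`, then
`π(G,r) = 1 + Σᵢ (π(G_i,r) − 1)`. -/
theorem cut_vertex_decomposition {V : Type} [Fintype V] (G : SimpleGraph V)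
    (hG : G.Connected) (r : V)
    (hcut : ¬ (G.induce {v | v ≠ r}).Connected) :
    pin G r = 1 + ∑ᶠ c : (G.induce {v | v ≠ r}).ConnectedComponent,
      (pin (G.induce (insert r (Subtype.val '' c.supp)))
        ⟨r, Set.mem_insert r _⟩ - 1) := by
  have hle : pin G r ≤ 1 + ∑ᶠ c : (G.induce {v : V | v ≠ r}).ConnectedComponent,
      (pin (G.induce (scSet c)) ⟨r, r_mem_sc c⟩ - 1) :=
    Nat.sInf_le (upper_mem hG)
  have hge := lower_bound hG (pin G r) (pin_solves hG r)
  exact le_antisymm hle hge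
end

section
/- In an r-unsolvable configuration on a connected graph G, every path from a big vertex (a vertex with at least two pebbles) to the root r contains at least one vertex with zero pebbles. -/
open SimpleGraph

lemma aux_solvable {V : Type} (G : SimpleGraph V) (r : V) :
    ∀ {v : V} (p : G.Walk v r), p.IsPath → ∀ C : V → ℕ, 2 ≤ C v →
      (∀ w ∈ p.support, w ≠ v → 1 ≤ C w) → TSolvable G C r 1 := by
  intro v p
  induction p with
  | nil => intro _ C h2 _; exact ⟨C, .refl, by omega⟩
  | @cons v u r h q ih =>
    intro hp C h2 hsupp
    classical
    have hne : u ≠ v := (G.ne_of_adj h).symm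
    set C' : V → ℕ := fun w => if w = v then C v - 2 else if w = u then C u + 1 else C w
      with hC'
    have hstep : PebStep G C C' := by
      refine ⟨v, u, h, h2, ?_, ?_, ?_⟩
      · simp [hC']; omega
      · simp [hC', hne]
      · intro w hwv hwu; simp [hC', hwv, hwu]
    have hu1 : 1 ≤ C u := hsupp u (by simp) hne
    have hvq : v ∉ q.support := by
      have := hp.support_nodup
      simp at this
      exact this.1
    have hsolv : TSolvable G C' r 1 := by
      apply ih hp.of_cons C'
      · simp [hC', hne]; omega
      · intro w hw hwu
        have hwv : w ≠ v := fun e => hvq (e ▸ hw)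
        have : 1 ≤ C w := hsupp w (by simp [hw]) hwv
        simpa [hC', hwv, hwu] using this
    obtain ⟨C'', hrel, hC''⟩ := hsolv
    exact ⟨C'', .head hstep hrel, hC''⟩

/-- in an `r`-unsolvable configuration, every path from a big vertex
(at least two pebbles) to the root contains an empty vertex. -/
theorem big_vertex_path_has_zero {V : Type} (G : SimpleGraph V) (hG : G.Connected)
    (r v : V) (C : V → ℕ) (hunsolv : ¬ TSolvable G C r 1) (hbig : 2 ≤ C v)
    (p : G.Walk v r) (hp : p.IsPath) :
    ∃ w ∈ p.support, C w = 0 := by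
  by_contra hcon
  push_neg at hcon
  exact hunsolv (aux_solvable G r p hp C hbig fun w hw _ =>
    Nat.one_le_iff_ne_zero.mpr (hcon w hw))
end
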